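/- arXiv:2512.20524 — 5 statements merged into one kernel-verified Lean document; each statement's English description precedes it below -/
import Mathlib

section
/- For every nonzero integer y, the integer 9*y^2 - 2*y + 1 is positive and is not a perfect square. -/
theorem nine_y_sq_sub_two_y_add_one_pos_nonsquare (y : ℤ) (hy : y ≠ 0) :
    0 < 9 * y ^ 2 - 2 * y + 1 ∧ ¬ IsSquare (9 * y ^ 2 - 2 * y + 1) := by
  constructor
  · nlinarith [sq_nonneg (y - 1), sq_nonneg y]
  · rintro ⟨r, hr⟩
    have hss : |r| * |r| = 9 * y ^ 2 - 2 * y + 1 := by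
      rw [abs_mul_abs_self]; exact hr.symm
    have hs0 : 0 ≤ |r| := abs_nonneg r
    set s := |r| with hs
    rcases hy.lt_or_gt with hneg | hpos
    · have h2 : -3 * y < s := by nlinarith
      have h3 : -3 * y + 1 ≤ s := by omega
      nlinarith
    · have h2 : s < 3 * y := by nlinarith
      have h3 : s ≤ 3 * y - 1 := by omega
      nlinarith
end

section
/- For every nonzero integer n, letting α = 3 + 3/(2*(9*n - 1)), the Möbius transformation given by the matrix B_α * A^{-1} * B_α^{2n} * A^{-3(9n-1)} sends 0 to 1/2, where A = [[1,1],[0,1]] and B_α = [[1,0],[α,1]] are matrices in SL(2, ℝ). -/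
/-!
Both generators are unipotent, so their integer powers are again unitriangular with the
exponent multiplying the off-diagonal entry, and `M` is an explicit product of four
unitriangular matrices. Writing `t = 9n - 1`, the choice of `α` makes the second column of
`M` collapse to `2t²` and `4t²`, whence `M · 0 = 1/2`.
-/

open Matrix

section Unitriangular

variable {R : Type*} [CommRing R]

theorem upper_unitriangular_mul (b c : R) :
    (!![1, b; 0, 1] : Matrix (Fin 2) (Fin 2) R) * !![1, c; 0, 1] = !![1, b + c; 0, 1] := by
  simp [add_comm]

theorem upper_unitriangular_inv (b : R) :
    (!![1, b; 0, 1] : Matrix (Fin 2) (Fin 2) R)⁻¹ = !![1, -b; 0, 1] :=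
  inv_eq_right_inv <| by rw [upper_unitriangular_mul, add_neg_cancel, one_fin_two]

theorem upper_unitriangular_zpow (b : R) (k : ℤ) :
    (!![1, b; 0, 1] : Matrix (Fin 2) (Fin 2) R) ^ k = !![1, k * b; 0, 1] := by
  have hdet : IsUnit (!![1, b; 0, 1] : Matrix (Fin 2) (Fin 2) R).det := by simp
  induction k using Int.induction_on with
  | zero => simp [one_fin_two]
  | succ m ih =>
    rw [zpow_add_one hdet, ih, upper_unitriangular_mul]
    push_cast; ring_nf
  | pred m ih =>
    rw [zpow_sub_one hdet, ih, upper_unitriangular_inv, upper_unitriangular_mul]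
    push_cast; ring_nf

theorem lower_unitriangular_zpow (c : R) (k : ℤ) :
    (!![1, 0; c, 1] : Matrix (Fin 2) (Fin 2) R) ^ k = !![1, 0; k * c, 1] := by
  have transpose_of : ∀ x y z w : R, (!![x, y; z, w])ᵀ = !![x, z; y, w] :=
    fun _ _ _ _ => (transposeᵣ_eq _).symm
  rw [← transpose_of, ← transpose_zpow, upper_unitriangular_zpow, transpose_of]

theorem lower_mul_upper_mul_lower_mul_upper (a b c d : R) :
    !![1, 0; a, 1] * !![1, b; 0, 1] * !![1, 0; c, 1] * !![1, d; 0, 1] =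
      !![1 + b * c, d * (1 + b * c) + b;
        a + c * (1 + a * b), d * (a + c * (1 + a * b)) + (1 + a * b)] := by
  simp only [Matrix.mul_fin_two]
  congr 1; ring_nf

end Unitriangular

theorem orbit_test_first_family_general (n : ℤ) :
    let α : ℝ := 3 + 3 / (2 * (9 * (n : ℝ) - 1))
    let A : Matrix (Fin 2) (Fin 2) ℝ := !![1, 1; 0, 1]
    let B : Matrix (Fin 2) (Fin 2) ℝ := !![1, 0; α, 1]
    let M : Matrix (Fin 2) (Fin 2) ℝ := B * A⁻¹ * B ^ (2 * n) * A ^ (-(3 * (9 * n - 1)))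
    M 0 1 / M 1 1 = 1 / 2 := by
  intro α A B M
  have ht : (9 * (n : ℝ) - 1) ≠ 0 := by exact_mod_cast (by omega : 9 * n - 1 ≠ 0)
  obtain ⟨hM01, hM11⟩ : M 0 1 = 2 * (9 * n - 1) ^ 2 ∧ M 1 1 = 4 * (9 * n - 1) ^ 2 := by
    simp only [M, A, B, upper_unitriangular_inv, upper_unitriangular_zpow,
      lower_unitriangular_zpow, lower_mul_upper_mul_lower_mul_upper, of_apply, cons_val',
      cons_val_zero, cons_val_one, empty_val', cons_val_fin_one, α]
    push_cast
    constructor <;> field_simp <;> ring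
  rw [hM01, hM11]
  field_simp
  norm_num

theorem orbit_test_first_family (n : ℤ) (hn : n ≠ 0) :
    let α : ℝ := 3 + 3 / (2 * (9 * (n : ℝ) - 1))
    let A : Matrix (Fin 2) (Fin 2) ℝ := !![1, 1; 0, 1]
    let B : Matrix (Fin 2) (Fin 2) ℝ := !![1, 0; α, 1]
    let M : Matrix (Fin 2) (Fin 2) ℝ := B * A⁻¹ * B ^ (2 * n) * A ^ (-(3 * (9 * n - 1)))
    M 0 1 / M 1 1 = 1 / 2 :=
  orbit_test_first_family_general n
end

section
/- Let n3, n4 be nonzero integers and n5 an integer; set r = 2*n5 - 1 and s = 2*n3 + 2*n5 - 1. Then there exist only finitely many nonzero integers y for which (s*y + n4*r)^2 - 8*n3*n4*r*y is a perfect square. In particular, for all but finitely many nonzero integers y, (s*y + n4*r)^2 - 8*n3*n4*r*y is a non-square positive integer. -/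
lemma aux_bound (Δ X : ℤ) (hΔ : Δ ≠ 0)
    (h : IsSquare (X ^ 2 + Δ) ∨ X ^ 2 + Δ ≤ 0) : |X| ≤ |Δ| := by
  have hΔpos : 0 < |Δ| := abs_pos.mpr hΔ
  rcases h with ⟨t, ht⟩ | h
  · -- X^2 + Δ = t*t
    set u : ℤ := |t| with hu
    have hu2 : u * u = X ^ 2 + Δ := by
      rw [hu, abs_mul_abs_self, ht]
    have hfac : (u - X) * (u + X) = Δ := by ring_nf; nlinarith [hu2]
    have h1 : u - X ≠ 0 := by
      intro h0; apply hΔ; rw [← hfac, h0, zero_mul]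
    have h2 : u + X ≠ 0 := by
      intro h0; apply hΔ; rw [← hfac, h0, mul_zero]
    have d1 : (u - X) ∣ Δ := ⟨u + X, hfac.symm⟩
    have d2 : (u + X) ∣ Δ := ⟨u - X, by rw [← hfac]; ring⟩
    have b1 : |u - X| ≤ |Δ| := Int.le_of_dvd hΔpos ((abs_dvd _ _).mpr ((dvd_abs _ _).mpr d1))
    have b2 : |u + X| ≤ |Δ| := Int.le_of_dvd hΔpos ((abs_dvd _ _).mpr ((dvd_abs _ _).mpr d2))
    have : |2 * X| ≤ |u + X| + |u - X| := by
      have : (2 : ℤ) * X = (u + X) - (u - X) := by ring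
      rw [this]; exact abs_sub _ _
    have habs : |2 * X| = 2 * |X| := by rw [abs_mul]; norm_num
    linarith [habs ▸ this]
  · -- X^2 + Δ ≤ 0
    have hX2 : X ^ 2 ≤ -Δ := by linarith
    have h1 : -Δ ≤ |Δ| := neg_le_abs Δ
    have h2 : |Δ| ≤ |Δ| ^ 2 := by nlinarith
    nlinarith [sq_abs X, abs_nonneg X, abs_nonneg Δ]

theorem finitely_many_square_values (n3 n4 n5 : ℤ) (h3 : n3 ≠ 0) (h4 : n4 ≠ 0) :
    {y : ℤ | y ≠ 0 ∧ IsSquare (((2 * n3 + 2 * n5 - 1) * y + n4 * (2 * n5 - 1)) ^ 2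
      - 8 * n3 * n4 * (2 * n5 - 1) * y)}.Finite ∧
    {y : ℤ | y ≠ 0 ∧ ¬ (0 < ((2 * n3 + 2 * n5 - 1) * y + n4 * (2 * n5 - 1)) ^ 2
      - 8 * n3 * n4 * (2 * n5 - 1) * y ∧
      ¬ IsSquare (((2 * n3 + 2 * n5 - 1) * y + n4 * (2 * n5 - 1)) ^ 2
      - 8 * n3 * n4 * (2 * n5 - 1) * y))}.Finite := by
  set s : ℤ := 2 * n3 + 2 * n5 - 1 with hs
  set r : ℤ := 2 * n5 - 1 with hr
  have hsne : s ≠ 0 := by omega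
  have hrne : r ≠ 0 := by omega
  set Δ : ℤ := 32 * n3 * n4 ^ 2 * r ^ 3 with hΔdef
  have hΔ : Δ ≠ 0 := by
    simp only [hΔdef]
    positivity
  set b : ℤ := 2 * n4 * r * (s - 4 * n3) with hb
  set g : ℤ → ℤ := fun y => 2 * s ^ 2 * y + b with hg
  have hginj : Function.Injective g := by
    intro a c h
    simp only [hg] at h
    have h2s : (2 : ℤ) * s ^ 2 ≠ 0 := by positivity
    have : 2 * s ^ 2 * a = 2 * s ^ 2 * c := by linarith
    exact mul_left_cancel₀ h2s this
  have key : ∀ y : ℤ, 4 * s ^ 2 * ((s * y + n4 * r) ^ 2 - 8 * n3 * n4 * r * y)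
      = (g y) ^ 2 + Δ := by
    intro y
    simp only [hg, hb, hΔdef, hs, hr]
    ring
  have hfin : (g ⁻¹' (Set.Icc (-|Δ|) |Δ|)).Finite :=
    (Set.finite_Icc _ _).preimage hginj.injOn
  constructor
  · apply hfin.subset
    rintro y ⟨-, t, ht⟩
    have hsq : IsSquare ((g y) ^ 2 + Δ) := by
      refine ⟨2 * s * t, ?_⟩
      have := key y
      rw [ht] at this
      nlinarith [this]
    have := aux_bound Δ (g y) hΔ (Or.inl hsq)
    simp only [Set.mem_preimage, Set.mem_Icc]
    exact abs_le.mp this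
  · apply hfin.subset
    rintro y ⟨-, hy⟩
    push_neg at hy
    have hbound : |g y| ≤ |Δ| := by
      rcases le_or_gt ((s * y + n4 * r) ^ 2 - 8 * n3 * n4 * r * y) 0 with hle | hlt
      · apply aux_bound Δ (g y) hΔ (Or.inr ?_)
        have := key y
        nlinarith [sq_nonneg s]
      · obtain ⟨t, ht⟩ := hy hlt
        apply aux_bound Δ (g y) hΔ (Or.inl ?_)
        refine ⟨2 * s * t, ?_⟩
        have := key y
        rw [ht] at this
        nlinarith [this]
    simp only [Set.mem_preimage, Set.mem_Icc]
    exact abs_le.mp hbound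
end

section
/- For nonzero integers a1, b1, a2, b2, a3 and real α, the (2,1)-entry of the matrix A^{a1} B_α^{b1} A^{a2} B_α^{b2} A^{a3} equals a2*b1*b2*α^2 + (b1 + b2)*α, where A = [[1,1],[0,1]] and B_α = [[1,0],[α,1]]. -/
/-!
Both generators are unipotent, so their integer powers are again unipotent:
`A ^ n = !![1, n; 0, 1]` and `B_α ^ n = !![1, 0; n α, 1]`. Multiplying the five resulting
matrices out, the `(2,1)`-entry is the stated polynomial in `α`.
-/

open Matrix

section Unipotent

variable {R : Type*} [CommRing R]

theorem upperUnipotent_mul (x y : R) :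
    !![1, x; 0, 1] * !![1, y; 0, 1] = !![1, x + y; 0, 1] := by
  simp [add_comm]

theorem upperUnipotent_inv (x : R) : (!![1, x; 0, 1])⁻¹ = !![1, -x; 0, 1] :=
  inv_eq_left_inv <| by rw [upperUnipotent_mul, neg_add_cancel, one_fin_two]

theorem upperUnipotent_zpow (x : R) (n : ℤ) :
    !![1, x; 0, 1] ^ n = !![1, (n : R) * x; 0, 1] := by
  have hdet : IsUnit (!![1, x; 0, 1]).det := by simp [det_fin_two]
  induction n using Int.induction_on with
  | zero => simp [one_fin_two]
  | succ k ih =>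
    rw [zpow_add_one hdet, ih, upperUnipotent_mul]
    push_cast
    ring_nf
  | pred k ih =>
    rw [zpow_sub_one hdet, ih, upperUnipotent_inv, upperUnipotent_mul]
    push_cast
    ring_nf

theorem lowerUnipotent_zpow (x : R) (n : ℤ) :
    !![1, 0; x, 1] ^ n = !![1, 0; (n : R) * x, 1] := by
  have htr : !![1, 0; x, 1] = (!![1, x; 0, 1])ᵀ := by ext i j; fin_cases i <;> fin_cases j <;> rfl
  rw [htr, ← transpose_zpow, upperUnipotent_zpow]
  ext i j; fin_cases i <;> fin_cases j <;> rfl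

end Unipotent

theorem entry_two_one_general (a1 b1 a2 b2 a3 : ℤ) (α : ℝ) :
    let A : Matrix (Fin 2) (Fin 2) ℝ := !![1, 1; 0, 1]
    let B : Matrix (Fin 2) (Fin 2) ℝ := !![1, 0; α, 1]
    (A ^ a1 * B ^ b1 * A ^ a2 * B ^ b2 * A ^ a3) 1 0 =
      (a2 : ℝ) * b1 * b2 * α ^ 2 + ((b1 : ℝ) + b2) * α := by
  intro A B
  simp only [A, B, upperUnipotent_zpow, lowerUnipotent_zpow, mul_fin_two, of_apply, cons_val',
    cons_val_one, cons_val_zero, empty_val', cons_val_fin_one]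
  ring

theorem entry_two_one (a1 b1 a2 b2 a3 : ℤ) (ha1 : a1 ≠ 0) (hb1 : b1 ≠ 0)
    (ha2 : a2 ≠ 0) (hb2 : b2 ≠ 0) (ha3 : a3 ≠ 0) (α : ℝ) :
    let A : Matrix (Fin 2) (Fin 2) ℝ := !![1, 1; 0, 1]
    let B : Matrix (Fin 2) (Fin 2) ℝ := !![1, 0; α, 1]
    (A ^ a1 * B ^ b1 * A ^ a2 * B ^ b2 * A ^ a3) 1 0 =
      (a2 : ℝ) * b1 * b2 * α ^ 2 + ((b1 : ℝ) + b2) * α :=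
  entry_two_one_general a1 b1 a2 b2 a3 α
end

section
/- Let p, q be coprime positive integers with p prime. Then there exist integers μ, ν1, ν2 with ν1, ν2 nonzero such that q/p = -p^{μ-1} * (ν1 + ν2)/(ν1 * ν2) as rational numbers. -/
/-!
If `q ∣ p ^ s - 1`, say `q * a = p ^ s - 1`, then `ν₁ = a p ^ s`, `ν₂ = -a` give
`ν₁ + ν₂ = q a²` and `ν₁ ν₂ = -a² p ^ s`, so `μ = s` works. Such an `s > 0` exists by
Euler's theorem in `ZMod |q|`, and `a ≠ 0` because a prime is not a root of unity.
-/

theorem Int.exists_pos_dvd_pow_sub_one {p q : ℤ} (hq : q ≠ 0) (h : IsCoprime p q) :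
    ∃ s : ℕ, 0 < s ∧ q ∣ p ^ s - 1 := by
  set n := q.natAbs
  have hq_zero : (q : ZMod n) = 0 :=
    (ZMod.intCast_zmod_eq_zero_iff_dvd q n).mpr (Int.natAbs_dvd.mpr dvd_rfl)
  have hunit : IsUnit (p : ZMod n) := by
    have h' : IsCoprime (p : ZMod n) (q : ZMod n) :=
      h.map (Int.castRingHom (ZMod n))
    rwa [hq_zero, isCoprime_zero_right] at h'
  refine ⟨n.totient, Nat.totient_pos.mpr (Int.natAbs_pos.mpr hq), ?_⟩
  rw [← Int.natAbs_dvd, ← ZMod.intCast_zmod_eq_zero_iff_dvd]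
  push_cast
  rw [← hunit.unit_spec, ← Units.val_pow_eq_pow_val, ZMod.pow_totient, Units.val_one, sub_self]

theorem Prime.pow_ne_one {M : Type*} [CommMonoidWithZero M] {p : M} (hp : Prime p) {s : ℕ}
    (hs : s ≠ 0) : p ^ s ≠ 1 := fun h =>
  hp.not_isUnit (isUnit_of_dvd_one (h ▸ dvd_pow_self p hs))

theorem div_eq_neg_zpow_mul_of_mul_eq_pow_sub_one {K : Type*} [Field K] {p q a : K} {s : ℕ}
    (hp : p ≠ 0) (ha : a ≠ 0) (h : q * a = p ^ s - 1) :
    q / p = -p ^ ((s : ℤ) - 1) * (a * p ^ s + -a) / (a * p ^ s * -a) := by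
  rw [zpow_sub₀ hp, zpow_natCast, zpow_one]
  field_simp
  linear_combination h

theorem exists_mu_nu_representation_general (p q : ℤ) (hp : Prime p)
    (hpq : IsCoprime p q) :
    ∃ (μ ν1 ν2 : ℤ), ν1 ≠ 0 ∧ ν2 ≠ 0 ∧
      (q : ℚ) / (p : ℚ) = -(p : ℚ) ^ (μ - 1) * ((ν1 : ℚ) + ν2) / ((ν1 : ℚ) * ν2) := by
  have hq : q ≠ 0 := by
    rintro rfl
    exact hp.not_isUnit (isCoprime_zero_right.mp hpq)
  obtain ⟨s, hs, a, ha⟩ := Int.exists_pos_dvd_pow_sub_one hq hpq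
  have ha0 : a ≠ 0 := by
    rintro rfl
    exact hp.pow_ne_one hs.ne' (sub_eq_zero.mp (by rw [ha, mul_zero]))
  refine ⟨s, a * p ^ s, -a, mul_ne_zero ha0 (pow_ne_zero _ hp.ne_zero), neg_ne_zero.mpr ha0, ?_⟩
  push_cast
  exact div_eq_neg_zpow_mul_of_mul_eq_pow_sub_one (by exact_mod_cast hp.ne_zero)
    (by exact_mod_cast ha0) (by exact_mod_cast ha.symm)

theorem exists_mu_nu_representation (p q : ℤ) (hp : Prime p) (hq : 0 < q)
    (hpq : IsCoprime p q) :
    ∃ (μ ν1 ν2 : ℤ), ν1 ≠ 0 ∧ ν2 ≠ 0 ∧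
      (q : ℚ) / (p : ℚ) = -(p : ℚ) ^ (μ - 1) * ((ν1 : ℚ) + ν2) / ((ν1 : ℚ) * ν2) :=
  exists_mu_nu_representation_general p q hp hpq
end
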